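/- arXiv:1908.11037 — 5 statements merged into one kernel-verified Lean document; each statement's English description precedes it below -/
import Mathlib

section
/- Let (T_n) be an increasing sequence in (0,∞) with T_n → ∞ and (ε_n) a sequence of positive reals such that (1/T_n)·Σ_{k=1}^{n-1} ε_k T_{k+1} + ε_n → 0 as n → ∞. Let Z ⊆ [0,∞) be a measurable set such that for all n and all T ≥ T_n, (1/T)·Leb(Z ∩ [T_n, T_{n+1}] ∩ [0,T]) ≤ ε_n. Then Z has zero upper density: limsup_{T→∞} Leb(Z ∩ [0,T])/T = 0. -/
open MeasureTheory Filter Set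

/-!
For `x ∈ [T n, T (n + 1))`, the set `Z ∩ [0, x]` is covered by `[0, T 0]`, the blocks
`Z ∩ [T k, T (k + 1)]` for `k < n`, each of measure at most `ε k * T (k + 1)`, and the block
`Z ∩ [T n, T (n + 1)] ∩ [0, x]` of measure at most `ε n * x`. Dividing by `x ≥ T n` bounds the
density at `x` by `T 0 / x` plus the `n`-th term of the sequence assumed to tend to `0`, and the
block index `n` tends to infinity with `x`.
-/

lemma exists_le_mem_Ico_of_mem_Ico {α : Type*} [LinearOrder α] {T : ℕ → α} {x : α} :
    ∀ {n : ℕ}, x ∈ Ico (T 0) (T (n + 1)) → ∃ k ≤ n, x ∈ Ico (T k) (T (k + 1))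
  | 0, hx => ⟨0, le_rfl, hx⟩
  | n + 1, hx => by
    by_cases hxn : x < T (n + 1)
    · obtain ⟨k, hkn, hk⟩ := exists_le_mem_Ico_of_mem_Ico ⟨hx.1, hxn⟩
      exact ⟨k, hkn.trans n.le_succ, hk⟩
    · exact ⟨n + 1, le_rfl, not_lt.1 hxn, hx.2⟩

lemma exists_tendsto_index_mem_Ico {α : Type*} [LinearOrder α] [NoMaxOrder α] {T : ℕ → α}
    (hT : Tendsto T atTop atTop) :
    ∃ ι : α → ℕ, Tendsto ι atTop atTop ∧ ∀ᶠ x in atTop, x ∈ Ico (T (ι x)) (T (ι x + 1)) := by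
  classical
  have hex : ∀ x, ∃ n, x < T (n + 1) := fun x =>
    ((tendsto_add_atTop_iff_nat 1).2 hT |>.eventually_gt_atTop x).exists
  refine ⟨fun x => Nat.find (hex x), tendsto_atTop.2 fun N => ?_, ?_⟩
  · filter_upwards [(eventually_all_finset (Finset.range N)).2
      fun k _ => eventually_ge_atTop (T (k + 1))] with x hx
    exact (Nat.le_find_iff _ _).2 fun m hm => not_lt.2 (hx m (Finset.mem_range.2 hm))
  · filter_upwards [eventually_ge_atTop (T 0)] with x hx0
    refine ⟨?_, Nat.find_spec (hex x)⟩
    rcases h : Nat.find (hex x) with _ | n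
    · exact hx0
    · exact not_lt.1 (Nat.find_min (hex x) (h ▸ n.lt_succ_self))

lemma inter_Icc_subset_Icc_union_biUnion {α : Type*} [LinearOrder α] {T : ℕ → α} {Z : Set α}
    {a x : α} {n : ℕ} (hx : x < T (n + 1)) :
    Z ∩ Icc a x ⊆
      Icc a (T 0) ∪ ⋃ k ∈ Finset.range (n + 1), Z ∩ Icc (T k) (T (k + 1)) ∩ Icc a x := by
  rintro y ⟨hyZ, hy⟩
  rcases le_or_gt y (T 0) with hy0 | hy0
  · exact Or.inl ⟨hy.1, hy0⟩
  · obtain ⟨k, hkn, hk⟩ := exists_le_mem_Ico_of_mem_Ico ⟨hy0.le, hy.2.trans_lt hx⟩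
    exact Or.inr (mem_biUnion (Finset.mem_range.2 (Nat.lt_succ_of_le hkn))
      ⟨⟨hyZ, Ico_subset_Icc_self hk⟩, hy⟩)

lemma volume_inter_Icc_ne_top (s : Set ℝ) (a b : ℝ) : volume (s ∩ Icc a b) ≠ ⊤ :=
  (measure_inter_lt_top_of_right_ne_top measure_Icc_lt_top.ne).ne

section
variable {T ε : ℕ → ℝ} {Z : Set ℝ}

lemma volume_real_inter_Icc_le (hT : Monotone T) (hT0 : 0 ≤ T 0)
    (hZ : ∀ n : ℕ, ∀ T' : ℝ, T n ≤ T' →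
      volume.real (Z ∩ Icc (T n) (T (n + 1)) ∩ Icc 0 T') ≤ ε n * T')
    {n : ℕ} {x : ℝ} (hx : x ∈ Ico (T n) (T (n + 1))) :
    volume.real (Z ∩ Icc 0 x) ≤ T 0 + ∑ k ∈ Finset.range n, ε k * T (k + 1) + ε n * x := by
  have hpiece : ∀ k < n, volume.real (Z ∩ Icc (T k) (T (k + 1)) ∩ Icc 0 x) ≤ ε k * T (k + 1) := by
    intro k _
    refine le_trans (measureReal_mono ?_ (volume_inter_Icc_ne_top _ _ _)) (hZ k _ (hT k.le_succ))
    rintro y ⟨⟨hyZ, hy⟩, hy0, -⟩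
    exact ⟨⟨hyZ, hy⟩, hy0, hy.2⟩
  have hcover_fin : volume (Icc 0 (T 0) ∪
      ⋃ k ∈ Finset.range (n + 1), Z ∩ Icc (T k) (T (k + 1)) ∩ Icc 0 x) ≠ ⊤ :=
    (measure_union_lt_top measure_Icc_lt_top (measure_biUnion_lt_top (Finset.finite_toSet _)
      fun _ _ => (volume_inter_Icc_ne_top _ _ _).lt_top)).ne
  calc volume.real (Z ∩ Icc 0 x)
      ≤ volume.real (Icc 0 (T 0)) +
          ∑ k ∈ Finset.range (n + 1), volume.real (Z ∩ Icc (T k) (T (k + 1)) ∩ Icc 0 x) :=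
        (measureReal_mono (inter_Icc_subset_Icc_union_biUnion hx.2) hcover_fin).trans <|
          (measureReal_union_le _ _).trans (add_le_add_right (measureReal_biUnion_finset_le _ _) _)
    _ = T 0 + ∑ k ∈ Finset.range n, volume.real (Z ∩ Icc (T k) (T (k + 1)) ∩ Icc 0 x) +
          volume.real (Z ∩ Icc (T n) (T (n + 1)) ∩ Icc 0 x) := by
        rw [Real.volume_real_Icc_of_le hT0, sub_zero, Finset.sum_range_succ, add_assoc]
    _ ≤ T 0 + ∑ k ∈ Finset.range n, ε k * T (k + 1) + ε n * x := by
        gcongr with k hk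
        · exact hpiece k (Finset.mem_range.1 hk)
        · exact hZ n x hx.1

lemma volume_real_inter_Icc_div_le (hT : Monotone T) (hT0 : 0 < T 0) (hε : ∀ n, 0 ≤ ε n)
    (hZ : ∀ n : ℕ, ∀ T' : ℝ, T n ≤ T' →
      volume.real (Z ∩ Icc (T n) (T (n + 1)) ∩ Icc 0 T') ≤ ε n * T')
    {n : ℕ} {x : ℝ} (hx : x ∈ Ico (T n) (T (n + 1))) :
    volume.real (Z ∩ Icc 0 x) / x ≤
      T 0 / x + ((∑ k ∈ Finset.range n, ε k * T (k + 1)) / T n + ε n) := by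
  have hTn : 0 < T n := hT0.trans_le (hT n.zero_le)
  have hx0 : 0 < x := hTn.trans_le hx.1
  have hsum : 0 ≤ ∑ k ∈ Finset.range n, ε k * T (k + 1) :=
    Finset.sum_nonneg fun k _ => mul_nonneg (hε k) (hT0.le.trans (hT k.succ.zero_le))
  calc volume.real (Z ∩ Icc 0 x) / x
      ≤ (T 0 + ∑ k ∈ Finset.range n, ε k * T (k + 1) + ε n * x) / x := by
        gcongr
        exact volume_real_inter_Icc_le hT hT0.le hZ hx
    _ = T 0 / x + ((∑ k ∈ Finset.range n, ε k * T (k + 1)) / x + ε n) := by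
        rw [add_div, add_div, mul_div_cancel_right₀ _ hx0.ne', add_assoc]
    _ ≤ T 0 / x + ((∑ k ∈ Finset.range n, ε k * T (k + 1)) / T n + ε n) := by
        gcongr
        exact hx.1

end

theorem stmt3_general (T : ℕ → ℝ) (hTmono : StrictMono T) (hTpos : ∀ n, 0 < T n)
    (hTtop : Tendsto T atTop atTop)
    (ε : ℕ → ℝ) (hεpos : ∀ n, 0 < ε n)
    (hcomb : Tendsto
      (fun n => (∑ k ∈ Finset.range n, ε k * T (k + 1)) / T n + ε n) atTop (nhds 0))
    (Z : Set ℝ)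
    (hZ : ∀ n : ℕ, ∀ T' : ℝ, T n ≤ T' →
      (volume (Z ∩ Set.Icc (T n) (T (n + 1)) ∩ Set.Icc 0 T')).toReal ≤ ε n * T') :
    Filter.limsup (fun T' : ℝ => (volume (Z ∩ Set.Icc 0 T')).toReal / T') atTop = 0 := by
  obtain ⟨ι, hι, hmem⟩ := exists_tendsto_index_mem_Ico hTtop
  have hbound : ∀ᶠ x in atTop, volume.real (Z ∩ Icc 0 x) / x ≤
      T 0 / x + ((∑ k ∈ Finset.range (ι x), ε k * T (k + 1)) / T (ι x) + ε (ι x)) :=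
    hmem.mono fun x hx => volume_real_inter_Icc_div_le hTmono.monotone (hTpos 0)
      (fun n => (hεpos n).le) hZ hx
  have hnonneg : ∀ᶠ x in atTop, 0 ≤ volume.real (Z ∩ Icc 0 x) / x :=
    (eventually_ge_atTop 0).mono fun x hx => div_nonneg measureReal_nonneg hx
  have hlim : Tendsto (fun x => T 0 / x +
      ((∑ k ∈ Finset.range (ι x), ε k * T (k + 1)) / T (ι x) + ε (ι x))) atTop (nhds 0) := by
    simpa using (tendsto_const_nhds.div_atTop tendsto_id).add (hcomb.comp hι)
  exact (tendsto_of_tendsto_of_tendsto_of_le_of_le' tendsto_const_nhds hlim hnonneg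
    hbound).limsup_eq

theorem stmt3 (T : ℕ → ℝ) (hTmono : StrictMono T) (hTpos : ∀ n, 0 < T n)
    (hTtop : Tendsto T atTop atTop)
    (ε : ℕ → ℝ) (hεpos : ∀ n, 0 < ε n)
    (hcomb : Tendsto
      (fun n => (∑ k ∈ Finset.range n, ε k * T (k + 1)) / T n + ε n) atTop (nhds 0))
    (Z : Set ℝ) (hZmeas : MeasurableSet Z) (hZsub : Z ⊆ Set.Ici 0)
    (hZ : ∀ n : ℕ, ∀ T' : ℝ, T n ≤ T' →
      (volume (Z ∩ Set.Icc (T n) (T (n + 1)) ∩ Set.Icc 0 T')).toReal ≤ ε n * T') :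
    Filter.limsup (fun T' : ℝ => (volume (Z ∩ Set.Icc 0 T')).toReal / T') atTop = 0 :=
  stmt3_general T hTmono hTpos hTtop ε hεpos hcomb Z hZ
end

section
/- Let B be a compact metrizable locally convex setting of probability measures on a compact metric space X with the weak* topology, and let U be a Borel probability measure on B. If ν₀ ∈ supp(U) and there are a continuous f₀ : X → ℝ and τ ∈ ℝ with ν₀(f₀ ∘ h_τ) ≠ ν₀(f₀) for a continuous flow h on X, then there exists a closed convex neighborhood C of ν₀ in B with U(C) > 0, U(∂C) = 0, and ν(f₀ ∘ h_τ) ≠ ν₀(f₀) for all ν ∈ C. -/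
open MeasureTheory Filter
open scoped ENNReal

theorem stmt7 {X : Type*} [MetricSpace X] [CompactSpace X]
    [MeasurableSpace X] [BorelSpace X]
    [MeasurableSpace (ProbabilityMeasure X)] [BorelSpace (ProbabilityMeasure X)]
    (h : ℝ → X → X) (hh : Continuous fun p : ℝ × X => h p.1 p.2)
    (hh0 : ∀ x, h 0 x = x) (hhadd : ∀ s t : ℝ, ∀ x, h (s + t) x = h s (h t x))
    (U : Measure (ProbabilityMeasure X)) [IsProbabilityMeasure U]
    (ν₀ : ProbabilityMeasure X)
    (hsupp : ∀ V : Set (ProbabilityMeasure X), IsOpen V → ν₀ ∈ V → 0 < U V)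
    (f₀ : C(X, ℝ)) (τ : ℝ)
    (hne : (∫ y, f₀ (h τ y) ∂(ν₀ : Measure X)) ≠ ∫ y, f₀ y ∂(ν₀ : Measure X)) :
    ∃ C : Set (ProbabilityMeasure X), IsClosed C ∧ C ∈ nhds ν₀ ∧
      (∀ ν₁ ∈ C, ∀ ν₂ ∈ C, ∀ a b : ℝ≥0∞, a + b = 1 →
        ∀ ν : ProbabilityMeasure X,
          (ν : Measure X) = a • (ν₁ : Measure X) + b • (ν₂ : Measure X) → ν ∈ C) ∧
      0 < U C ∧ U (frontier C) = 0 ∧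
      ∀ ν ∈ C, (∫ y, f₀ (h τ y) ∂(ν : Measure X)) ≠ ∫ y, f₀ y ∂(ν₀ : Measure X) := by
  -- the test function y ↦ f₀ (h τ y) as a bounded continuous function
  have hcont : Continuous fun y : X => f₀ (h τ y) :=
    f₀.continuous.comp (hh.comp (Continuous.prodMk_right τ))
  set fb : BoundedContinuousFunction X ℝ :=
    BoundedContinuousFunction.mkOfCompact ⟨fun y => f₀ (h τ y), hcont⟩ with hfb
  set g : ProbabilityMeasure X → ℝ := fun ν => ∫ y, fb y ∂(ν : Measure X) with hgdef
  have hg : Continuous g :=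
    MeasureTheory.ProbabilityMeasure.continuous_integral_boundedContinuousFunction fb
  have hgν : ∀ ν : ProbabilityMeasure X, g ν = ∫ y, f₀ (h τ y) ∂(ν : Measure X) := by
    intro ν; rfl
  set c : ℝ := ∫ y, f₀ y ∂(ν₀ : Measure X) with hc
  set F : ProbabilityMeasure X → ℝ := fun ν => |g ν - g ν₀| with hF
  have hFcont : Continuous F := (hg.sub continuous_const).abs
  set δ : ℝ := |g ν₀ - c| with hδdef
  have hδ : 0 < δ := by
    rw [hδdef]
    refine abs_pos.mpr (sub_ne_zero.mpr ?_)
    rw [hgν]; exact hne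
  -- choose a good radius r with null level set
  have hbadc : Set.Countable {r : ℝ | 0 < U {ν | F ν = r}} :=
    Measure.countable_meas_level_set_pos hFcont.measurable
  have hIoo : ¬ (Set.Ioo (0:ℝ) δ).Countable := by
    intro hcnt
    have h1 : (Cardinal.mk (Set.Ioo (0:ℝ) δ)) ≤ Cardinal.aleph0 :=
      Cardinal.le_aleph0_iff_set_countable.mpr hcnt
    rw [Cardinal.mk_Ioo_real hδ] at h1
    exact absurd (h1.trans_lt Cardinal.aleph0_lt_continuum) (lt_irrefl _)
  have hnsub : ¬ Set.Ioo (0:ℝ) δ ⊆ {r : ℝ | 0 < U {ν | F ν = r}} :=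
    fun hs => hIoo (hbadc.mono hs)
  obtain ⟨r, hrI, hrgood⟩ := Set.not_subset.mp hnsub
  have hr0 : 0 < r := hrI.1
  have hrδ : r < δ := hrI.2
  have hrnull : U {ν | F ν = r} = 0 := by
    by_contra hne'
    exact hrgood (pos_iff_ne_zero.mpr hne')
  refine ⟨F ⁻¹' Set.Iic r, ?_, ?_, ?_, ?_, ?_, ?_⟩
  · exact isClosed_Iic.preimage hFcont
  · -- neighborhood
    have hopen : IsOpen (F ⁻¹' Set.Iio r) := isOpen_Iio.preimage hFcont
    have hmem : ν₀ ∈ F ⁻¹' Set.Iio r := by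
      simp only [Set.mem_preimage, Set.mem_Iio, hF, sub_self, abs_zero]; exact hr0
    exact mem_of_superset (hopen.mem_nhds hmem)
      (Set.preimage_mono Set.Iio_subset_Iic_self)
  · -- convexity
    intro ν₁ h1 ν₂ h2 a b hab ν hν
    have ha : a ≠ ⊤ := by
      intro hT; rw [hT] at hab; simp at hab
    have hb : b ≠ ⊤ := by
      intro hT; rw [hT] at hab; simp at hab
    have habr : a.toReal + b.toReal = 1 := by
      rw [← ENNReal.toReal_add ha hb, hab]; simp
    have ha0 : 0 ≤ a.toReal := ENNReal.toReal_nonneg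
    have hb0 : 0 ≤ b.toReal := ENNReal.toReal_nonneg
    have key : g ν = a.toReal * g ν₁ + b.toReal * g ν₂ := by
      simp only [hgdef]
      rw [hν, integral_add_measure ((fb.integrable _).smul_measure ha)
        ((fb.integrable _).smul_measure hb), integral_smul_measure,
        integral_smul_measure, smul_eq_mul, smul_eq_mul]
    have e1 : F ν₁ ≤ r := h1
    have e2 : F ν₂ ≤ r := h2
    simp only [hF, Set.mem_preimage, Set.mem_Iic] at e1 e2 ⊢
    have habs := abs_add_le (a.toReal * (g ν₁ - g ν₀)) (b.toReal * (g ν₂ - g ν₀))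
    rw [abs_mul, abs_mul, abs_of_nonneg ha0, abs_of_nonneg hb0] at habs
    have : a.toReal * (g ν₁ - g ν₀) + b.toReal * (g ν₂ - g ν₀) = g ν - g ν₀ := by
      rw [key]; linear_combination (-(g ν₀)) * habr
    rw [this] at habs
    nlinarith [mul_le_mul_of_nonneg_left e1 ha0, mul_le_mul_of_nonneg_left e2 hb0]
  · -- positive measure
    have hopen : IsOpen (F ⁻¹' Set.Iio r) := isOpen_Iio.preimage hFcont
    have hmem : ν₀ ∈ F ⁻¹' Set.Iio r := by
      simp only [Set.mem_preimage, Set.mem_Iio, hF, sub_self, abs_zero]; exact hr0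
    exact lt_of_lt_of_le (hsupp _ hopen hmem)
      (measure_mono (Set.preimage_mono Set.Iio_subset_Iic_self))
  · -- null frontier
    refine measure_mono_null ?_ hrnull
    have h1 : frontier (F ⁻¹' Set.Iic r) ⊆ F ⁻¹' frontier (Set.Iic r) :=
      hFcont.frontier_preimage_subset _
    rwa [frontier_Iic] at h1
  · -- separation
    intro ν hν
    rw [← hgν]
    intro hgc
    have : F ν ≤ r := hν
    rw [hF] at this
    simp only [hgc] at this
    rw [abs_sub_comm] at this
    exact absurd (lt_of_le_of_lt this hrδ) (lt_irrefl _)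
end

section
/- Let (π_n) be a sequence of Borel probability measures on a locally compact space S converging weak* to the Dirac mass at a point ∞ in the one-point compactification, and with π_n({∞}) = 0. Suppose G : S → B is a map into a compact metric space B and μ ∈ B is such that for every neighborhood V of μ, π_n({s ∈ S : G(s) ∉ V}) → 0 as n → ∞. Suppose moreover S = [1,∞) × I and for every ε > 0 there exists T_ε > 1 with π_n({(T,θ) ∈ [T_ε,∞) × I : G(T,θ) ∉ V}) < ε for all n. Then there exists a measurable set Z ⊆ S with lim_n π_n(Z) = 0 and G(s) → μ as s → ∞ with s ∉ Z. -/
/-!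
Fix a countable neighbourhood basis `V k` of `μ` and, by the uniform hypothesis, times `t k`
such that the set of points of `S` beyond time `t k` where `G` leaves `V k` has mass `< 2⁻ᵏ`
under every `π n`. The union of these bad sets is the exceptional set: outside it `G p ∈ V k`
as soon as `t k ≤ p.1`, and its mass tends to `0` by dominated convergence for the series of
the masses of the pieces, each of which tends to `0`. Since `G` is not assumed measurable,
`Z` is a measurable hull of this union, taken simultaneously for all `π n`.
-/

open MeasureTheory Filter Topology
open scoped ENNReal

theorem ENNReal.tendsto_tsum_of_dominated_convergence {ι : Type*} {l : Filter ι}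
    [l.IsCountablyGenerated] {F : ι → ℕ → ℝ≥0∞} {f : ℕ → ℝ≥0∞} (bound : ℕ → ℝ≥0∞)
    (h_bound : ∀ n k, F n k ≤ bound k) (h_fin : ∑' k, bound k ≠ ∞)
    (h_lim : ∀ k, Tendsto (fun n => F n k) l (𝓝 (f k))) :
    Tendsto (fun n => ∑' k, F n k) l (𝓝 (∑' k, f k)) := by
  simp only [← lintegral_count]
  exact tendsto_lintegral_filter_of_dominated_convergence bound
    (.of_forall fun _ => measurable_of_countable _) (.of_forall fun n => .of_forall (h_bound n))
    (by rwa [lintegral_count]) (.of_forall h_lim)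

theorem MeasureTheory.tendsto_measure_iUnion_zero_of_summable_bound {α ι : Type*}
    [MeasurableSpace α] {l : Filter ι} [l.IsCountablyGenerated] {π : ι → Measure α}
    {A : ℕ → Set α} (bound : ℕ → ℝ≥0∞) (h_bound : ∀ n k, π n (A k) ≤ bound k)
    (h_fin : ∑' k, bound k ≠ ∞) (h_lim : ∀ k, Tendsto (fun n => π n (A k)) l (𝓝 0)) :
    Tendsto (fun n => π n (⋃ k, A k)) l (𝓝 0) := by
  have h_tsum : Tendsto (fun n => ∑' k, π n (A k)) l (𝓝 0) := by
    simpa using ENNReal.tendsto_tsum_of_dominated_convergence bound h_bound h_fin h_lim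
  exact tendsto_of_tendsto_of_tendsto_of_le_of_le tendsto_const_nhds h_tsum
    (fun _ => zero_le) (fun n => measure_iUnion_le _)

theorem MeasureTheory.exists_measurable_superset_subset_forall_eq {α ι : Type*}
    [MeasurableSpace α] [Countable ι] (π : ι → Measure α) {A S : Set α} (hAS : A ⊆ S)
    (hS : MeasurableSet S) :
    ∃ Z, MeasurableSet Z ∧ A ⊆ Z ∧ Z ⊆ S ∧ ∀ n, π n Z = π n A := by
  obtain ⟨W, hAW, hW, hπW⟩ := exists_measurable_superset_forall_eq π A
  refine ⟨W ∩ S, hW.inter hS, Set.subset_inter hAW hAS, Set.inter_subset_right, fun n => ?_⟩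
  exact le_antisymm ((measure_mono Set.inter_subset_left).trans (hπW n).le)
    (measure_mono (Set.subset_inter hAW hAS))

theorem exists_measurableSet_tendsto_outside {α B : Type*} [MeasurableSpace α]
    [TopologicalSpace B] [FirstCountableTopology B] {S : Set α} (hS : MeasurableSet S)
    (τ : α → ℝ) (π : ℕ → Measure α) (G : α → B) (μ : B)
    (hG : ∀ V ∈ 𝓝 μ, Tendsto (fun n => π n {p ∈ S | G p ∉ V}) atTop (𝓝 0))
    (hGunif : ∀ V ∈ 𝓝 μ, ∀ ε : ℝ≥0∞, 0 < ε → ∃ T : ℝ, ∀ n, π n {p ∈ S | T ≤ τ p ∧ G p ∉ V} < ε) :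
    ∃ Z : Set α, MeasurableSet Z ∧ Z ⊆ S ∧ Tendsto (fun n => π n Z) atTop (𝓝 0) ∧
      ∀ V ∈ 𝓝 μ, ∃ T₀ : ℝ, ∀ p ∈ S, p ∉ Z → T₀ ≤ τ p → G p ∈ V := by
  obtain ⟨V, hV⟩ := (𝓝 μ).exists_antitone_basis
  choose t ht using fun k => hGunif (V k) (hV.mem k) (2⁻¹ ^ k) (ENNReal.pow_pos (by norm_num) k)
  set bad : ℕ → Set α := fun k => {p ∈ S | t k ≤ τ p ∧ G p ∉ V k}
  obtain ⟨Z, hZ, hbadZ, hZS, hπZ⟩ := exists_measurable_superset_subset_forall_eq π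
    (A := ⋃ k, bad k) (Set.iUnion_subset fun k _ hp => hp.1) hS
  refine ⟨Z, hZ, hZS, ?_, fun U hU => ?_⟩
  · simp only [hπZ]
    refine tendsto_measure_iUnion_zero_of_summable_bound (fun k => 2⁻¹ ^ k)
      (fun n k => (ht k n).le) (by simp [ENNReal.tsum_geometric]) fun k => ?_
    exact tendsto_of_tendsto_of_tendsto_of_le_of_le tendsto_const_nhds (hG (V k) (hV.mem k))
      (fun _ => zero_le) fun n => measure_mono fun p hp => ⟨hp.1, hp.2.2⟩
  · obtain ⟨k, -, hkU⟩ := hV.toHasBasis.mem_iff.mp hU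
    refine ⟨t k, fun p hpS hpZ hpt => hkU ?_⟩
    by_contra hpV
    exact hpZ (hbadZ (Set.mem_iUnion.mpr ⟨k, hpS, hpt, hpV⟩))

theorem stmt11_general {B : Type*} [MetricSpace B]
    (c d : ℝ)
    (S : Set (ℝ × ℝ)) (hS : S = Set.Ici (1:ℝ) ×ˢ Set.Icc c d)
    (π : ℕ → Measure (ℝ × ℝ))
    (G : ℝ × ℝ → B) (μ : B)
    (hG : ∀ V ∈ nhds μ, Tendsto (fun n => π n {p ∈ S | G p ∉ V}) atTop (nhds 0))
    (hGunif : ∀ V ∈ nhds μ, ∀ ε : ℝ≥0∞, 0 < ε → ∃ Tε : ℝ, 1 < Tε ∧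
      ∀ n, π n {p ∈ S | Tε ≤ p.1 ∧ G p ∉ V} < ε) :
    ∃ Z : Set (ℝ × ℝ), MeasurableSet Z ∧ Z ⊆ S ∧
      Tendsto (fun n => π n Z) atTop (nhds 0) ∧
      ∀ V ∈ nhds μ, ∃ T₀ : ℝ, ∀ p ∈ S, p ∉ Z → T₀ ≤ p.1 → G p ∈ V :=
  exists_measurableSet_tendsto_outside (hS ▸ measurableSet_Ici.prod measurableSet_Icc) Prod.fst
    π G μ hG fun V hV ε hε => (hGunif V hV ε hε).imp fun _ h => h.2

theorem stmt11 {B : Type*} [MetricSpace B] [CompactSpace B]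
    (c d : ℝ) (hcd : c ≤ d)
    (S : Set (ℝ × ℝ)) (hS : S = Set.Ici (1:ℝ) ×ˢ Set.Icc c d)
    (π : ℕ → Measure (ℝ × ℝ)) (hπprob : ∀ n, IsProbabilityMeasure (π n))
    (hπsupp : ∀ n, π n S = 1)
    (hπdirac : ∀ M : ℝ, Tendsto (fun n => π n (Set.Icc 1 M ×ˢ Set.Icc c d)) atTop (nhds 0))
    (G : ℝ × ℝ → B) (μ : B)
    (hG : ∀ V ∈ nhds μ, Tendsto (fun n => π n {p ∈ S | G p ∉ V}) atTop (nhds 0))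
    (hGunif : ∀ V ∈ nhds μ, ∀ ε : ℝ≥0∞, 0 < ε → ∃ Tε : ℝ, 1 < Tε ∧
      ∀ n, π n {p ∈ S | Tε ≤ p.1 ∧ G p ∉ V} < ε) :
    ∃ Z : Set (ℝ × ℝ), MeasurableSet Z ∧ Z ⊆ S ∧
      Tendsto (fun n => π n Z) atTop (nhds 0) ∧
      ∀ V ∈ nhds μ, ∃ T₀ : ℝ, ∀ p ∈ S, p ∉ Z → T₀ ≤ p.1 → G p ∈ V :=
  stmt11_general c d S hS π G μ hG hGunif
end

section
/- Let I ⊆ ℝ be a compact interval, and let d : [1,∞) × I → [0,∞) be a measurable function such that: (a) for θ in a set P of positive Lebesgue measure, limsup_{T→∞} d(T,θ) > 0; (b) there exist ε, δ > 0 and a positive measure subset P_ε ⊆ P such that for each θ ∈ P_ε there is a sequence T_n(θ) → ∞ with d(T,θ) ≥ ε/2 for all T ∈ [(1−δ)T_n(θ), (1+δ)T_n(θ)]. Then there exists a sequence of compactly supported absolutely continuous probability measures π_n on [1,∞) × I, converging to the Dirac mass at infinity of the one-point compactification, such that liminf_n π_n({(T,θ) : d(T,θ) ≥ ε/2}) >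 0. -/
open MeasureTheory Filter
open scoped ENNReal

/-!
Cut the time axis into the geometric windows `[(1 + δ) ^ k, (1 + δ) ^ (k + 1)]`. Each window is
short enough to fit inside some `[(1 - δ) T_n(θ), (1 + δ) T_n(θ)]`, so every `θ ∈ P_ε` sees
infinitely many windows on which `d(·, θ) ≥ ε / 2`. Since `P_ε` has positive measure, infinitely
many windows `W_k` make `(W_k × I) ∩ {d ≥ ε / 2}` of positive area, and `π_n` is normalised
Lebesgue measure on these sets: it is carried by `{d ≥ ε / 2}` and escapes to infinity with `k`.
-/

open ProbabilityTheory Set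

/-- Take the first power of `1 + δ` above `(1 - δ) T`; the next one still lies below `(1 + δ) T`
because `(1 + δ) ^ 2 (1 - δ) ≤ 1 + δ`. -/
lemma exists_pow_window_subset {δ T : ℝ} (hδ : 0 < δ) {K : ℕ} (hT : (1 + δ) ^ K ≤ T) :
    ∃ k ≥ K, Icc ((1 + δ) ^ k) ((1 + δ) ^ (k + 1)) ⊆ Icc ((1 - δ) * T) ((1 + δ) * T) := by
  have hq : 1 < 1 + δ := by linarith
  have hT0 : 0 ≤ T := (pow_nonneg (by linarith) K).trans hT
  by_cases hlow : (1 - δ) * T ≤ (1 + δ) ^ K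
  · refine ⟨K, le_rfl, Icc_subset_Icc hlow ?_⟩
    rw [pow_succ, mul_comm]
    exact mul_le_mul_of_nonneg_left hT (by linarith)
  rw [not_le] at hlow
  obtain ⟨n, hn, hn'⟩ := exists_nat_pow_near ((one_le_pow₀ hq.le).trans hlow.le) hq
  have hKn : K ≤ n := Nat.lt_succ_iff.mp ((pow_lt_pow_iff_right₀ hq).mp (hlow.trans hn'))
  refine ⟨n + 1, by omega, Icc_subset_Icc hn'.le ?_⟩
  calc (1 + δ) ^ (n + 1 + 1) = (1 + δ) ^ 2 * (1 + δ) ^ n := by ring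
    _ ≤ (1 + δ) ^ 2 * ((1 - δ) * T) := by gcongr
    _ ≤ (1 + δ) * T := by nlinarith [mul_nonneg (mul_nonneg hT0 hδ.le) (sq_nonneg δ)]

lemma frequently_exists_pow_window_subset {δ : ℝ} (hδ : 0 < δ) {Tn : ℕ → ℝ}
    (hTn : Tendsto Tn atTop atTop) :
    ∃ᶠ k in atTop, ∃ n, Icc ((1 + δ) ^ k) ((1 + δ) ^ (k + 1)) ⊆
      Icc ((1 - δ) * Tn n) ((1 + δ) * Tn n) := by
  refine frequently_atTop.2 fun K => ?_
  obtain ⟨n, hn⟩ := (hTn.eventually_ge_atTop ((1 + δ) ^ K)).exists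
  obtain ⟨k, hKk, hk⟩ := exists_pow_window_subset hδ hn
  exact ⟨k, hKk, n, hk⟩

lemma frequently_measure_inter_ne_zero {α : Type*} [MeasurableSpace α] {μ : Measure α}
    {S : Set α} (hS : μ S ≠ 0) {B : ℕ → Set α} (hB : ∀ x ∈ S, ∃ᶠ k in atTop, x ∈ B k) :
    ∃ᶠ k in atTop, μ (S ∩ B k) ≠ 0 := by
  refine frequently_atTop.2 fun K => ?_
  by_contra! hnull
  refine hS (measure_mono_null (fun x hx => ?_) (measure_iUnion_null fun k =>
    measure_iUnion_null (hnull k)))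
  obtain ⟨k, hKk, hk⟩ := frequently_atTop.1 (hB x hx) K
  exact mem_iUnion₂.2 ⟨k, hKk, hx, hk⟩

lemma frequently_volume_pow_window_prod_inter_ne_zero {δ a : ℝ} (hδ : 0 < δ) {f : ℝ → ℝ → ℝ}
    {S C : Set ℝ} (hSC : S ⊆ C) (hS : volume S ≠ 0)
    (hf : ∀ θ ∈ S, ∃ Tn : ℕ → ℝ, Tendsto Tn atTop atTop ∧
      ∀ n, ∀ T ∈ Icc ((1 - δ) * Tn n) ((1 + δ) * Tn n), a ≤ f T θ) :
    ∃ᶠ k in atTop,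
      volume ((Icc ((1 + δ) ^ k) ((1 + δ) ^ (k + 1)) ×ˢ C) ∩ {p | a ≤ f p.1 p.2}) ≠ 0 := by
  set W : ℕ → Set ℝ := fun k => Icc ((1 + δ) ^ k) ((1 + δ) ^ (k + 1))
  refine (frequently_measure_inter_ne_zero hS
    (B := fun k => {θ | ∀ T ∈ W k, a ≤ f T θ}) fun θ hθ => ?_).mono fun k hk => ?_
  · obtain ⟨Tn, hTn, hgood⟩ := hf θ hθ
    exact (frequently_exists_pow_window_subset hδ hTn).mono
      fun k ⟨n, hn⟩ T hT => hgood n T (hn hT)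
  have hW : volume (W k) ≠ 0 := by
    rw [Real.volume_Icc, ne_eq, ENNReal.ofReal_eq_zero, not_le, sub_pos]
    exact pow_lt_pow_right₀ (by linarith) k.lt_succ_self
  have hsub : W k ×ˢ (S ∩ {θ | ∀ T ∈ W k, a ≤ f T θ}) ⊆ (W k ×ˢ C) ∩ {p | a ≤ f p.1 p.2} :=
    fun p ⟨hT, hθ, hgood⟩ => ⟨⟨hT, hSC hθ⟩, hgood p.1 hT⟩
  -- `Measure.prod_prod` holds for arbitrary sets, so `S` need not be measurable.
  refine fun h0 => mul_ne_zero hW hk ?_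
  rw [← Measure.prod_prod, ← Measure.volume_eq_prod]
  exact measure_mono_null hsub h0

section cond

variable {Ω : Type*} [MeasurableSpace Ω] {μ : Measure Ω} {s t : Set Ω}

lemma cond_eq_one_of_subset (hs₀ : μ s ≠ 0) (hs : μ s ≠ ∞) (hst : s ⊆ t) : μ[t|s] = 1 :=
  have := cond_isProbabilityMeasure_of_finite hs₀ hs
  le_antisymm prob_le_one ((cond_apply_self hs₀ hs).symm.trans_le (measure_mono hst))

lemma cond_eq_zero_of_disjoint (hs : MeasurableSet s) (hst : Disjoint s t) : μ[t|s] = 0 := by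
  rw [cond_apply hs, hst.inter_eq, measure_empty, mul_zero]

end cond

theorem stmt13_general (c d : ℝ)
    (dfun : ℝ → ℝ → ℝ) (hdmeas : Measurable fun p : ℝ × ℝ => dfun p.1 p.2)
    (P : Set ℝ) (hPsub : P ⊆ Set.Icc c d)
    (ε δ : ℝ) (hδ : 0 < δ)
    (Pε : Set ℝ) (hPεsub : Pε ⊆ P) (hPεpos : 0 < volume Pε)
    (hb : ∀ θ ∈ Pε, ∃ Tn : ℕ → ℝ, Tendsto Tn atTop atTop ∧
      ∀ n, ∀ T ∈ Set.Icc ((1 - δ) * Tn n) ((1 + δ) * Tn n), ε / 2 ≤ dfun T θ) :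
    ∃ π : ℕ → Measure (ℝ × ℝ), (∀ n, IsProbabilityMeasure (π n)) ∧
      (∀ n, π n ≪ volume) ∧
      (∀ n, ∃ M : ℝ, π n (Set.Icc 1 M ×ˢ Set.Icc c d) = 1) ∧
      (∀ M : ℝ, Tendsto (fun n => π n (Set.Icc 1 M ×ˢ Set.Icc c d)) atTop (nhds 0)) ∧
      0 < Filter.liminf (fun n => π n {p : ℝ × ℝ | ε / 2 ≤ dfun p.1 p.2}) atTop := by
  set G := {p : ℝ × ℝ | ε / 2 ≤ dfun p.1 p.2}
  set A : ℕ → Set (ℝ × ℝ) := fun k => (Icc ((1 + δ) ^ k) ((1 + δ) ^ (k + 1)) ×ˢ Icc c d) ∩ G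
  have hAmeas k : MeasurableSet (A k) :=
    (measurableSet_Icc.prod measurableSet_Icc).inter (measurableSet_le measurable_const hdmeas)
  have hAfin k : volume (A k) ≠ ∞ := by
    refine ne_top_of_le_ne_top ?_ (measure_mono inter_subset_left)
    rw [Measure.volume_eq_prod, Measure.prod_prod, Real.volume_Icc, Real.volume_Icc]
    exact ENNReal.mul_ne_top ENNReal.ofReal_ne_top ENNReal.ofReal_ne_top
  obtain ⟨φ, hφ, hφA⟩ := extraction_of_frequently_atTop <|
    frequently_volume_pow_window_prod_inter_ne_zero hδ (hPεsub.trans hPsub) hPεpos.ne' hb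
  refine ⟨fun n => volume[|A (φ n)], fun n => cond_isProbabilityMeasure_of_finite (hφA n) (hAfin _),
    fun n => cond_absolutelyContinuous, fun n => ⟨(1 + δ) ^ (φ n + 1), ?_⟩, fun M => ?_, ?_⟩
  · exact cond_eq_one_of_subset (hφA n) (hAfin _)
      fun p ⟨⟨hT, hθ⟩, _⟩ => ⟨⟨(one_le_pow₀ (by linarith)).trans hT.1, hT.2⟩, hθ⟩
  · have hescape : ∀ᶠ n in atTop, M < (1 + δ) ^ φ n :=
      (tendsto_pow_atTop_atTop_of_one_lt (by linarith)).comp hφ.tendsto_atTop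
        |>.eventually_gt_atTop M
    refine tendsto_const_nhds.congr' (hescape.mono fun n hn => ?_)
    refine (cond_eq_zero_of_disjoint (hAmeas _) ?_).symm
    exact disjoint_left.2 fun p ⟨⟨hT, _⟩, _⟩ ⟨hM, _⟩ => (hn.trans_le hT.1).not_ge hM.2
  · have hG n : volume[G|A (φ n)] = 1 :=
      cond_eq_one_of_subset (hφA n) (hAfin _) inter_subset_right
    simp only [hG, liminf_const, zero_lt_one]

theorem stmt13 (c d : ℝ) (hcd : c < d)
    (dfun : ℝ → ℝ → ℝ) (hdmeas : Measurable fun p : ℝ × ℝ => dfun p.1 p.2)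
    (P : Set ℝ) (hPmeas : MeasurableSet P) (hPsub : P ⊆ Set.Icc c d)
    (hPpos : 0 < volume P)
    (ha : ∀ θ ∈ P, 0 < Filter.limsup (fun T : ℝ => dfun T θ) atTop)
    (ε δ : ℝ) (hε : 0 < ε) (hδ : 0 < δ)
    (Pε : Set ℝ) (hPεmeas : MeasurableSet Pε) (hPεsub : Pε ⊆ P) (hPεpos : 0 < volume Pε)
    (hb : ∀ θ ∈ Pε, ∃ Tn : ℕ → ℝ, Tendsto Tn atTop atTop ∧
      ∀ n, ∀ T ∈ Set.Icc ((1 - δ) * Tn n) ((1 + δ) * Tn n), ε / 2 ≤ dfun T θ) :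
    ∃ π : ℕ → Measure (ℝ × ℝ), (∀ n, IsProbabilityMeasure (π n)) ∧
      (∀ n, π n ≪ volume) ∧
      (∀ n, ∃ M : ℝ, π n (Set.Icc 1 M ×ˢ Set.Icc c d) = 1) ∧
      (∀ M : ℝ, Tendsto (fun n => π n (Set.Icc 1 M ×ˢ Set.Icc c d)) atTop (nhds 0)) ∧
      0 < Filter.liminf (fun n => π n {p : ℝ × ℝ | ε / 2 ≤ dfun p.1 p.2}) atTop :=
  stmt13_general c d dfun hdmeas P hPsub ε δ hδ Pε hPεsub hPεpos hb
end

section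
/- Let I ⊆ ℝ be a compact interval with normalized Lebesgue measure Θ_I, and let A ⊆ [1,∞) × I be measurable. Suppose that for every sequence (τ_n) of Borel probability measures on [1,∞) converging weak* to the Dirac mass at +∞ we have (τ_n × Θ_I)(A) → 0. Then for Lebesgue-almost every θ ∈ I, liminf_{T→∞} (1/T)·Leb{t ∈ [1,T] : (t,θ) ∈ A} = 0. -/
/-!
Test the hypothesis against `τₙ`, the uniform probability measure on `[1, n + 2]`. By Fubini,
`(τₙ × Θ_I)(A)` is the `Θ_I`-average of `θ ↦ τₙ(A_θ)`, so these averages tend to `0`, and by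
Fatou's lemma `liminfₙ τₙ(A_θ) = 0` for almost every `θ`. Since
`Leb([1, T] ∩ A_θ) / T ≤ Leb([1, T] ∩ A_θ) / (T - 1) = τ(A_θ)` for the uniform measure `τ` on
`[1, T]`, the density of `A_θ` is small along a sequence `Tₙ → ∞`.
-/

open MeasureTheory Filter Set ProbabilityTheory
open scoped ENNReal Topology

lemma ENNReal.tendsto_zero_of_tendsto_const_mul {ι : Type*} {l : Filter ι} {f : ι → ℝ≥0∞}
    {k : ℝ≥0∞} (hk : k ≠ 0) (h : Tendsto (fun i => k * f i) l (𝓝 0)) :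
    Tendsto f l (𝓝 0) := by
  -- `k` may be `∞`, so divide by the finite nonzero lower bound `min k 1` instead.
  set k' := min k 1
  have hk' : k' ≠ 0 := by simp [k', hk]
  have hk'_top : k' ≠ ∞ := (min_le_right k 1).trans_lt ENNReal.one_lt_top |>.ne
  have hmul : Tendsto (fun i => k' * f i) l (𝓝 0) :=
    tendsto_of_tendsto_of_tendsto_of_le_of_le tendsto_const_nhds h (fun _ => zero_le)
      (fun i => mul_le_mul_left (min_le_left k 1) (f i))
  simpa [← mul_assoc, ENNReal.inv_mul_cancel hk' hk'_top] using
    ENNReal.Tendsto.const_mul hmul (Or.inr (ENNReal.inv_ne_top.2 hk'))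

lemma ae_liminf_eq_zero_of_tendsto_lintegral {α : Type*} [MeasurableSpace α] {μ : Measure α}
    {f : ℕ → α → ℝ≥0∞} (hf : ∀ n, Measurable (f n))
    (h : Tendsto (fun n => ∫⁻ x, f n x ∂μ) atTop (𝓝 0)) :
    ∀ᵐ x ∂μ, liminf (fun n => f n x) atTop = 0 := by
  have hfatou : ∫⁻ x, liminf (fun n => f n x) atTop ∂μ = 0 :=
    le_antisymm (h.liminf_eq ▸ lintegral_liminf_le hf) zero_le
  exact (lintegral_eq_zero_iff (Measurable.liminf hf)).1 hfatou

lemma isProbabilityMeasure_cond_Icc {a b : ℝ} (hab : a < b) :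
    IsProbabilityMeasure (volume[|Icc a b]) :=
  cond_isProbabilityMeasure_of_finite (by simpa using hab) measure_Icc_lt_top.ne

lemma cond_Icc_apply_Ici {a b : ℝ} (hab : a < b) : volume[Ici a | Icc a b] = 1 := by
  rw [cond_apply measurableSet_Icc, inter_eq_left.2 Icc_subset_Ici_self]
  exact ENNReal.inv_mul_cancel (by simpa using hab) measure_Icc_lt_top.ne

lemma tendsto_cond_Icc_apply_Icc {ι : Type*} {l : Filter ι} {b : ι → ℝ}
    (hb : Tendsto b l atTop) (a M : ℝ) :
    Tendsto (fun i => volume[Icc a M | Icc a (b i)]) l (𝓝 0) := by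
  have hinv : Tendsto (fun i => (volume (Icc a (b i)))⁻¹) l (𝓝 0) := by
    simpa [sub_eq_add_neg] using
      (ENNReal.tendsto_ofReal_atTop.comp (tendsto_atTop_add_const_right l (-a) hb)).inv
  have hbound : Tendsto (fun i => (volume (Icc a (b i)))⁻¹ * volume (Icc a M)) l (𝓝 0) := by
    simpa using ENNReal.Tendsto.mul_const hinv
      (Or.inr (measure_Icc_lt_top (μ := volume) (a := a) (b := M)).ne)
  refine tendsto_of_tendsto_of_tendsto_of_le_of_le tendsto_const_nhds hbound (fun _ => zero_le)
    fun i => ?_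
  rw [cond_apply measurableSet_Icc]
  gcongr
  exact inter_subset_right

lemma toReal_measure_Icc_inter_div_le {T : ℝ} (hT : 1 < T) (S : Set ℝ) :
    (volume (Icc 1 T ∩ S)).toReal / T ≤ (volume[S | Icc 1 T]).toReal := by
  rw [cond_apply measurableSet_Icc, ENNReal.toReal_mul, ENNReal.toReal_inv, Real.volume_Icc,
    ENNReal.toReal_ofReal (by linarith), div_eq_mul_inv, mul_comm]
  gcongr
  linarith

lemma liminf_density_eq_zero_of_liminf_cond_Icc {S : Set ℝ} {b : ℕ → ℝ} (hb1 : ∀ n, 1 < b n)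
    (hb : Tendsto b atTop atTop) (hS : liminf (fun n => volume[S | Icc 1 (b n)]) atTop = 0) :
    liminf (fun T : ℝ => (volume (Icc 1 T ∩ S)).toReal / T) atTop = 0 := by
  set F := fun T : ℝ => (volume (Icc 1 T ∩ S)).toReal / T
  have hF_nonneg : ∀ᶠ T in atTop, 0 ≤ F T :=
    eventually_ge_atTop 0 |>.mono fun T hT => div_nonneg ENNReal.toReal_nonneg hT
  have hF_le_one : ∀ᶠ T in atTop, F T ≤ 1 := by
    filter_upwards [eventually_gt_atTop 1] with T hT
    have := isProbabilityMeasure_cond_Icc hT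
    exact (toReal_measure_Icc_inter_div_le hT S).trans
      (ENNReal.toReal_le_of_le_ofReal zero_le_one (by simpa using prob_le_one))
  have hsmall : ∀ ε > 0, ∃ᶠ T in atTop, F T ≤ ε := by
    intro ε hε
    have hfreq : ∃ᶠ n in atTop, volume[S | Icc 1 (b n)] < ENNReal.ofReal ε :=
      frequently_lt_of_liminf_lt (by isBoundedDefault) (by simpa [hS] using hε)
    refine hb.frequently (hfreq.mono fun n hn => ?_)
    exact (toReal_measure_Icc_inter_div_le (hb1 n) S).trans (ENNReal.toReal_lt_of_lt_ofReal hn).le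
  refine le_antisymm (le_of_forall_pos_le_add fun ε hε => ?_)
    (le_liminf_of_le (isBoundedUnder_of_eventually_le hF_le_one).isCoboundedUnder_ge hF_nonneg)
  simpa using liminf_le_of_frequently_le (hsmall ε hε) (isBoundedUnder_of_eventually_ge hF_nonneg)

theorem stmt17_general (c d : ℝ)
    (A : Set (ℝ × ℝ)) (hAmeas : MeasurableSet A)
    (h : ∀ τ : ℕ → Measure ℝ, (∀ n, IsProbabilityMeasure (τ n)) →
      (∀ n, τ n (Set.Ici (1:ℝ)) = 1) →
      (∀ M : ℝ, Tendsto (fun n => τ n (Set.Icc 1 M)) atTop (nhds 0)) →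
      Tendsto (fun n => ((τ n).prod ((volume (Set.Icc c d))⁻¹ • volume.restrict (Set.Icc c d))) A)
        atTop (nhds 0)) :
    ∀ᵐ θ ∂(volume.restrict (Set.Icc c d)),
      Filter.liminf
        (fun T : ℝ => (volume {t : ℝ | t ∈ Set.Icc 1 T ∧ (t, θ) ∈ A}).toReal / T) atTop = 0 := by
  set b : ℕ → ℝ := fun n => n + 2
  have hb1 : ∀ n, 1 < b n := fun n => by simp only [b]; linarith [n.cast_nonneg (α := ℝ)]
  have hb : Tendsto b atTop atTop := tendsto_atTop_add_const_right _ _ tendsto_natCast_atTop_atTop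
  have hprod := h (fun n => volume[|Icc 1 (b n)]) (fun n => isProbabilityMeasure_cond_Icc (hb1 n))
    (fun n => cond_Icc_apply_Ici (hb1 n)) (tendsto_cond_Icc_apply_Icc hb 1)
  simp only [Measure.prod_smul_right, Measure.smul_apply, smul_eq_mul] at hprod
  have hsections := ENNReal.tendsto_zero_of_tendsto_const_mul
    (ENNReal.inv_ne_zero.2 measure_Icc_lt_top.ne) hprod
  simp only [Measure.prod_apply_symm hAmeas] at hsections
  filter_upwards [ae_liminf_eq_zero_of_tendsto_lintegral
    (fun n => measurable_measure_prodMk_right hAmeas) hsections] with θ hθ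
  exact liminf_density_eq_zero_of_liminf_cond_Icc hb1 hb hθ

theorem stmt17 (c d : ℝ) (hcd : c < d)
    (A : Set (ℝ × ℝ)) (hAmeas : MeasurableSet A)
    (hAsub : A ⊆ Set.Ici (1:ℝ) ×ˢ Set.Icc c d)
    (h : ∀ τ : ℕ → Measure ℝ, (∀ n, IsProbabilityMeasure (τ n)) →
      (∀ n, τ n (Set.Ici (1:ℝ)) = 1) →
      (∀ M : ℝ, Tendsto (fun n => τ n (Set.Icc 1 M)) atTop (nhds 0)) →
      Tendsto (fun n => ((τ n).prod ((volume (Set.Icc c d))⁻¹ • volume.restrict (Set.Icc c d))) A)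
        atTop (nhds 0)) :
    ∀ᵐ θ ∂(volume.restrict (Set.Icc c d)),
      Filter.liminf
        (fun T : ℝ => (volume {t : ℝ | t ∈ Set.Icc 1 T ∧ (t, θ) ∈ A}).toReal / T) atTop = 0 :=
  stmt17_general c d A hAmeas h
end
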